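/- arXiv:1905.04891 — 4 statements merged into one kernel-verified Lean document; each statement's English description precedes it below -/
import Mathlib

section
/- Let n ≥ 1, 0 ≤ α < n, and let f ∈ L¹(ℝⁿ). Then there exists a constant C depending only on n and α such that for every x ∈ ℝⁿ, M_α f(x) ≤ C · (M f(x))^{1 − α/n} · ‖f‖_{L¹(ℝⁿ)}^{α/n}. -/
open MeasureTheory Metric ENNReal

/-- The fractional maximal function `M_α f (x) = sup_{ρ>0} ρ^α ⨍_{B_ρ(x)} f`,
for an `ℝ≥0∞`-valued function `f` on `ℝⁿ`. Here `M := M₀` is the Hardy–Littlewood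
maximal function. -/
noncomputable def fracMax {n : ℕ} (α : ℝ)
    (f : EuclideanSpace ℝ (Fin n) → ℝ≥0∞) (x : EuclideanSpace ℝ (Fin n)) : ℝ≥0∞ :=
  ⨆ (ρ : ℝ) (_ : 0 < ρ), ENNReal.ofReal (ρ ^ α) * ⨍⁻ y in ball x ρ, f y ∂volume

/-! Put `θ = α / n` and `A = ⨍_{B_ρ(x)} |f|`. Since `ρ^α = (ρⁿ)^θ`, the quantity `ρ^α A` is the
geometric mean `A^{1-θ} (ρⁿ A)^θ`. The first factor is at most `M f(x)`, and
`ρⁿ A = ∫_{B_ρ(x)} |f| / |B_1| ≤ ‖f‖₁ / |B_1|`. Taking the supremum over `ρ` gives the bound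
with `C = |B_1|^{-θ}`. -/

theorem ENNReal.rpow_mul_le_mul_rpow {A M r I : ℝ≥0∞} {θ : ℝ} (hθ0 : 0 ≤ θ) (hθ1 : θ ≤ 1)
    (hAM : A ≤ M) (hrA : r * A ≤ I) : r ^ θ * A ≤ M ^ (1 - θ) * I ^ θ :=
  calc r ^ θ * A = r ^ θ * (A ^ (1 - θ) * A ^ θ) := by
        rw [← rpow_add_of_nonneg _ _ (by linarith) hθ0, sub_add_cancel, rpow_one]
    _ = A ^ (1 - θ) * (r * A) ^ θ := by rw [mul_rpow_of_nonneg _ _ hθ0]; ring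
    _ ≤ M ^ (1 - θ) * I ^ θ :=
        mul_le_mul' (rpow_le_rpow hAM (by linarith)) (rpow_le_rpow hrA hθ0)

theorem ofReal_pow_finrank_mul_setLAverage_ball_le {E : Type*} [NormedAddCommGroup E]
    [NormedSpace ℝ E] [MeasurableSpace E] [BorelSpace E] [FiniteDimensional ℝ E]
    (μ : Measure E) [μ.IsAddHaarMeasure] (g : E → ℝ≥0∞) (x : E) {ρ : ℝ}
    (hρ : 0 < ρ) :
    ENNReal.ofReal (ρ ^ Module.finrank ℝ E) * ⨍⁻ y in ball x ρ, g y ∂μ ≤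
      (μ (ball 0 1))⁻¹ * ∫⁻ y, g y ∂μ := by
  have hρn : ENNReal.ofReal (ρ ^ Module.finrank ℝ E) ≠ 0 := (ofReal_pos.2 (pow_pos hρ _)).ne'
  rw [setLAverage_eq, Measure.addHaar_ball_of_pos μ x hρ, ← mul_div_assoc,
    ENNReal.mul_div_mul_left _ _ hρn ofReal_ne_top, ENNReal.div_eq_inv_mul]
  exact mul_le_mul' le_rfl (setLIntegral_le_lintegral _ _)

theorem setLAverage_ball_le_fracMax_zero {n : ℕ} (g : EuclideanSpace ℝ (Fin n) → ℝ≥0∞)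
    (x : EuclideanSpace ℝ (Fin n)) {ρ : ℝ} (hρ : 0 < ρ) :
    ⨍⁻ y in ball x ρ, g y ∂volume ≤ fracMax 0 g x := by
  simpa [fracMax] using le_iSup₂ (f := fun (ρ : ℝ) (_ : 0 < ρ) =>
    ENNReal.ofReal (ρ ^ (0 : ℝ)) * ⨍⁻ y in ball x ρ, g y ∂volume) ρ hρ

theorem fracMax_le_mul_fracMax_zero_rpow_mul_lintegral_rpow {n : ℕ} (hn : n ≠ 0) {α : ℝ}
    (hα0 : 0 ≤ α) (hαn : α ≤ n) (g : EuclideanSpace ℝ (Fin n) → ℝ≥0∞)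
    (x : EuclideanSpace ℝ (Fin n)) :
    fracMax α g x ≤ (volume (ball (0 : EuclideanSpace ℝ (Fin n)) 1))⁻¹ ^ (α / n) *
      fracMax 0 g x ^ (1 - α / n) * (∫⁻ y, g y ∂volume) ^ (α / n) := by
  have hn' : (0 : ℝ) < n := by positivity
  have hθ0 : 0 ≤ α / n := div_nonneg hα0 hn'.le
  have hθ1 : α / n ≤ 1 := (div_le_one hn').mpr hαn
  refine iSup₂_le fun ρ hρ => ?_
  have hρα : ENNReal.ofReal (ρ ^ α) = ENNReal.ofReal (ρ ^ n) ^ (α / n) := by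
    rw [ofReal_rpow_of_nonneg (by positivity) hθ0, ← Real.rpow_natCast_mul hρ.le,
      mul_div_cancel₀ _ hn'.ne']
  have hkey := ofReal_pow_finrank_mul_setLAverage_ball_le volume g x hρ
  rw [finrank_euclideanSpace_fin] at hkey
  calc ENNReal.ofReal (ρ ^ α) * ⨍⁻ y in ball x ρ, g y ∂volume
      = ENNReal.ofReal (ρ ^ n) ^ (α / n) * ⨍⁻ y in ball x ρ, g y ∂volume := by rw [hρα]
    _ ≤ fracMax 0 g x ^ (1 - α / n) *
          ((volume (ball (0 : EuclideanSpace ℝ (Fin n)) 1))⁻¹ * ∫⁻ y, g y ∂volume) ^ (α / n) :=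
        rpow_mul_le_mul_rpow hθ0 hθ1 (setLAverage_ball_le_fracMax_zero g x hρ) hkey
    _ = _ := by rw [mul_rpow_of_nonneg _ _ hθ0]; ring

theorem stmt1_general (n : ℕ) (α : ℝ) (hα0 : 0 ≤ α) (hαn : α < n) :
    ∃ C : ℝ, 0 < C ∧
      ∀ f : EuclideanSpace ℝ (Fin n) → ℝ, Integrable f volume →
        ∀ x : EuclideanSpace ℝ (Fin n),
          fracMax α (fun y => ENNReal.ofReal |f y|) x ≤
            ENNReal.ofReal C *
              (fracMax 0 (fun y => ENNReal.ofReal |f y|) x) ^ (1 - α / n) *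
              (∫⁻ y, ENNReal.ofReal |f y| ∂volume) ^ (α / n) := by
  have hn : n ≠ 0 := Nat.cast_ne_zero.1 (hα0.trans_lt hαn).ne'
  set vB := volume (ball (0 : EuclideanSpace ℝ (Fin n)) 1)
  have hvB0 : vB ≠ 0 := (measure_ball_pos _ _ one_pos).ne'
  have hC0 : vB⁻¹ ^ (α / n) ≠ 0 :=
    (rpow_pos (ENNReal.inv_pos.2 measure_ball_lt_top.ne) (inv_ne_top.2 hvB0)).ne'
  have hCtop : vB⁻¹ ^ (α / n) ≠ ∞ :=
    rpow_ne_top_of_nonneg (div_nonneg hα0 n.cast_nonneg) (inv_ne_top.2 hvB0)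
  refine ⟨(vB⁻¹ ^ (α / n)).toReal, toReal_pos hC0 hCtop, fun f _ x => ?_⟩
  rw [ofReal_toReal hCtop]
  exact fracMax_le_mul_fracMax_zero_rpow_mul_lintegral_rpow hn hα0 hαn.le _ x

/-- for `f ∈ L¹(ℝⁿ)` and `0 ≤ α < n`,
`M_α f(x) ≤ C (M f(x))^{1-α/n} ‖f‖₁^{α/n}` with `C = C(n, α)`. -/
theorem stmt1 (n : ℕ) (hn : 1 ≤ n) (α : ℝ) (hα0 : 0 ≤ α) (hαn : α < n) :
    ∃ C : ℝ, 0 < C ∧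
      ∀ f : EuclideanSpace ℝ (Fin n) → ℝ, Integrable f volume →
        ∀ x : EuclideanSpace ℝ (Fin n),
          fracMax α (fun y => ENNReal.ofReal |f y|) x ≤
            ENNReal.ofReal C *
              (fracMax 0 (fun y => ENNReal.ofReal |f y|) x) ^ (1 - α / n) *
              (∫⁻ y, ENNReal.ofReal |f y| ∂volume) ^ (α / n) :=
  stmt1_general n α hα0 hαn
end

section
/- Let n ≥ 1, r > 0, 0 ≤ α ≤ n, x ∈ ℝⁿ and y, w ∈ B_r(x). Then for every locally integrable f : ℝⁿ → ℝ, Mʳ(Tʳ_α f)(y) ≤ 4^{n−α} · M_α f(w). -/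
open MeasureTheory Metric ENNReal

/-- The cut-off fractional maximal function `Mʳ_α f (x) = sup_{0<ρ<r} ρ^α ⨍_{B_ρ(x)} f`;
`Mʳ := Mʳ₀`. -/
noncomputable def fracMaxLt {n : ℕ} (α r : ℝ)
    (f : EuclideanSpace ℝ (Fin n) → ℝ≥0∞) (x : EuclideanSpace ℝ (Fin n)) : ℝ≥0∞ :=
  ⨆ (ρ : ℝ) (_ : 0 < ρ) (_ : ρ < r), ENNReal.ofReal (ρ ^ α) * ⨍⁻ y in ball x ρ, f y ∂volume

/-- The cut-off fractional maximal function `Tʳ_α f (x) = sup_{ρ≥r} ρ^α ⨍_{B_ρ(x)} f`. -/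
noncomputable def fracMaxGe {n : ℕ} (α r : ℝ)
    (f : EuclideanSpace ℝ (Fin n) → ℝ≥0∞) (x : EuclideanSpace ℝ (Fin n)) : ℝ≥0∞ :=
  ⨆ (ρ : ℝ) (_ : r ≤ ρ), ENNReal.ofReal (ρ ^ α) * ⨍⁻ y in ball x ρ, f y ∂volume

/-!
If `dist z w < 3r` and `s ≥ r`, then `B_s(z) ⊆ B_{4s}(w)`; passing from the average over the
small ball to the average over the large one costs the volume ratio `4ⁿ`, and `s^α = 4^{-α} (4s)^α`,
so `Tʳ_α f ≤ 4^{n-α} M_α f(w)` on `B_{3r}(w)`. This ball contains `B_r(y)`, and the averages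
defining `Mʳ` at `y` only see values on `B_r(y)`.
-/

theorem setLAverage_le_measure_div_mul_setLAverage {X : Type*} [MeasurableSpace X]
    {μ : Measure X} {s t : Set X} (f : X → ℝ≥0∞) (hst : s ⊆ t) (ht : μ t ≠ ∞) :
    ⨍⁻ x in s, f x ∂μ ≤ μ t / μ s * ⨍⁻ x in t, f x ∂μ := by
  rw [setLAverage_eq, ← ENNReal.mul_div_right_comm, measure_mul_setLAverage f ht]
  exact ENNReal.div_le_div_right (lintegral_mono_set hst) _

section AddHaar

variable {E : Type*} [NormedAddCommGroup E] [NormedSpace ℝ E] [MeasurableSpace E] [BorelSpace E]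
  [FiniteDimensional ℝ E] (μ : Measure E) [μ.IsAddHaarMeasure]

theorem addHaar_ball_mul_div_addHaar_ball (z w : E) {k s : ℝ} (hk : 0 < k) (hs : 0 < s) :
    μ (ball w (k * s)) / μ (ball z s) = ENNReal.ofReal (k ^ Module.finrank ℝ E) := by
  rw [Measure.addHaar_ball_mul_of_pos μ w hk, ← Measure.addHaar_ball_center μ z,
    ENNReal.mul_div_cancel_right (measure_ball_pos μ z hs).ne' measure_ball_lt_top.ne]

theorem ofReal_rpow_mul_setLAverage_ball_le (f : E → ℝ≥0∞) {z w : E} {α k s : ℝ}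
    (hk : 0 < k) (hs : 0 < s) (hsub : ball z s ⊆ ball w (k * s)) :
    ENNReal.ofReal (s ^ α) * ⨍⁻ u in ball z s, f u ∂μ ≤
      ENNReal.ofReal (k ^ ((Module.finrank ℝ E : ℝ) - α)) *
        (ENNReal.ofReal ((k * s) ^ α) * ⨍⁻ u in ball w (k * s), f u ∂μ) := by
  calc ENNReal.ofReal (s ^ α) * ⨍⁻ u in ball z s, f u ∂μ
      ≤ ENNReal.ofReal (s ^ α) *
          (ENNReal.ofReal (k ^ Module.finrank ℝ E) * ⨍⁻ u in ball w (k * s), f u ∂μ) := by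
        rw [← addHaar_ball_mul_div_addHaar_ball μ z w hk hs]
        gcongr
        exact setLAverage_le_measure_div_mul_setLAverage f hsub measure_ball_lt_top.ne
    _ = _ := by
        rw [← mul_assoc, ← mul_assoc, ← ENNReal.ofReal_mul (by positivity),
          ← ENNReal.ofReal_mul (by positivity)]
        congr 2
        rw [Real.mul_rpow hk.le hs.le, Real.rpow_sub hk, Real.rpow_natCast]
        field_simp

end AddHaar

section EuclideanSpace

variable {n : ℕ}

theorem fracMaxGe_le_fracMax_of_dist_le (F : EuclideanSpace ℝ (Fin n) → ℝ≥0∞)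
    {z w : EuclideanSpace ℝ (Fin n)} {α r k : ℝ} (hr : 0 < r) (hk : 1 ≤ k)
    (hz : dist z w ≤ (k - 1) * r) :
    fracMaxGe α r F z ≤ ENNReal.ofReal (k ^ ((n : ℝ) - α)) * fracMax α F w := by
  refine iSup₂_le fun s hs => ?_
  have hs0 : 0 < s := hr.trans_le hs
  have hsub : ball z s ⊆ ball w (k * s) := ball_subset_ball' (by nlinarith)
  calc ENNReal.ofReal (s ^ α) * ⨍⁻ u in ball z s, F u ∂volume
      ≤ ENNReal.ofReal (k ^ ((n : ℝ) - α)) *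
          (ENNReal.ofReal ((k * s) ^ α) * ⨍⁻ u in ball w (k * s), F u ∂volume) := by
        simpa only [finrank_euclideanSpace_fin] using
          ofReal_rpow_mul_setLAverage_ball_le volume F (by linarith) hs0 hsub
    _ ≤ ENNReal.ofReal (k ^ ((n : ℝ) - α)) * fracMax α F w := by
        gcongr
        exact le_iSup₂_of_le (k * s) (by positivity) le_rfl

theorem fracMaxLt_zero_le_of_forall_mem_ball_le {G : EuclideanSpace ℝ (Fin n) → ℝ≥0∞}
    {y : EuclideanSpace ℝ (Fin n)} {r : ℝ} {C : ℝ≥0∞} (hG : ∀ z ∈ ball y r, G z ≤ C) :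
    fracMaxLt 0 r G y ≤ C := by
  refine iSup₂_le fun ρ _ => iSup_le fun hρr => ?_
  rw [Real.rpow_zero, ENNReal.ofReal_one, one_mul]
  refine (laverage_le_essSup G).trans (essSup_le_of_ae_le C ?_)
  exact ae_restrict_of_forall_mem measurableSet_ball
    fun z hz => hG z (ball_subset_ball hρr.le hz)

end EuclideanSpace

theorem stmt5_general (n : ℕ) (r : ℝ) (hr : 0 < r) (α : ℝ)
    (x y w : EuclideanSpace ℝ (Fin n)) (hy : y ∈ ball x r) (hw : w ∈ ball x r)
    (f : EuclideanSpace ℝ (Fin n) → ℝ) :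
    fracMaxLt 0 r (fracMaxGe α r (fun t => ENNReal.ofReal |f t|)) y ≤
      ENNReal.ofReal ((4 : ℝ) ^ ((n : ℝ) - α)) *
        fracMax α (fun t => ENNReal.ofReal |f t|) w := by
  refine fracMaxLt_zero_le_of_forall_mem_ball_le fun z hz => ?_
  refine fracMaxGe_le_fracMax_of_dist_le _ hr (by norm_num) ?_
  have htri := dist_triangle4 z y x w
  rw [mem_ball] at hy hw hz
  rw [dist_comm x w] at htri
  linarith

/-- for `y, w ∈ B_r(x)`, `Mʳ(Tʳ_α f)(y) ≤ 4^{n-α} M_α f(w)`. -/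
theorem stmt5 (n : ℕ) (hn : 1 ≤ n) (r : ℝ) (hr : 0 < r)
    (α : ℝ) (hα0 : 0 ≤ α) (hαn : α ≤ n)
    (x y w : EuclideanSpace ℝ (Fin n)) (hy : y ∈ ball x r) (hw : w ∈ ball x r)
    (f : EuclideanSpace ℝ (Fin n) → ℝ) (hf : LocallyIntegrable f volume) :
    fracMaxLt 0 r (fracMaxGe α r (fun t => ENNReal.ofReal |f t|)) y ≤
      ENNReal.ofReal ((4 : ℝ) ^ ((n : ℝ) - α)) *
        fracMax α (fun t => ENNReal.ofReal |f t|) w :=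
  stmt5_general n r hr α x y w hy hw f
end

section
/- Let n ≥ 1, 0 < α < n, ρ > 0 and x ∈ ℝⁿ. Then there exists a constant C depending only on n and α such that for every locally integrable f : ℝⁿ → ℝ, ∫_{B_ρ(x)} M_α(χ_{B_{2ρ}(x)} f)(y) dy ≤ C · ρ^α · ∫_{B_{2ρ}(x)} |f(z)| dz. -/
/-!
Averaging `g` over `B_r(y)` is dominated by integrating it against the kernel `|y - z|^(α - n)`,
which is at least `r^(α - n)` there; so `M_α g ≤ |B_1|⁻¹ I_α g` pointwise, `I_α` being the
Riesz potential. By Tonelli, integrating `I_α g` over `B_ρ(x)` attaches to each `z ∈ B_{2ρ}(x)`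
the integral of the kernel over `B_ρ(x) ⊆ B_{3ρ}(z)`, and polar coordinates give
`∫_{B_R(z)} |y - z|^(α - n) dy = (n / α) |B_1| R^α`. Hence `C = (n / α) 3^α` works.
-/

open MeasureTheory Metric ENNReal

open Set Module

lemma pow_sub_one_mul_rpow_sub {d : ℕ} (hd : 1 ≤ d) (α : ℝ) {t : ℝ} (ht : 0 < t) :
    t ^ (d - 1) * t ^ (α - d) = t ^ (α - 1) := by
  rw [← Real.rpow_natCast, ← Real.rpow_add ht, Nat.cast_sub hd]
  ring_nf

section Kernel

variable {E : Type*} [NormedAddCommGroup E] [NormedSpace ℝ E] [FiniteDimensional ℝ E]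
  [Nontrivial E] [MeasurableSpace E] [BorelSpace E] (μ : Measure E) [μ.IsAddHaarMeasure]

lemma integrableOn_ball_norm_rpow_sub_finrank {α : ℝ} (hα : 0 < α) (R : ℝ) :
    IntegrableOn (fun y : E => ‖y‖ ^ (α - finrank ℝ E)) (ball 0 R) μ := by
  rcases le_or_gt R 0 with hR | hR
  · simp [ball_eq_empty.mpr hR]
  rw [integrableOn_fun_norm_addHaar μ (f := fun t => t ^ (α - finrank ℝ E))]
  have hIoo : IntegrableOn (fun t : ℝ => t ^ (α - 1)) (Ioo 0 R) :=
    (intervalIntegral.integrableOn_Ioo_rpow_iff hR).mpr (by linarith)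
  refine hIoo.congr_fun (fun t ht => ?_) measurableSet_Ioo
  simp only [smul_eq_mul]
  exact (pow_sub_one_mul_rpow_sub finrank_pos α ht.1).symm

lemma integral_ball_norm_rpow_sub_finrank {α : ℝ} (hα : 0 < α) {R : ℝ} (hR : 0 ≤ R) :
    ∫ y in ball (0 : E) R, ‖y‖ ^ (α - finrank ℝ E) ∂μ =
      finrank ℝ E / α * R ^ α * μ.real (ball 0 1) := by
  have hball : ∀ y : E, (ball (0 : E) R).indicator (fun y => ‖y‖ ^ (α - finrank ℝ E)) y =
      (Iio R).indicator (fun t => t ^ (α - finrank ℝ E)) ‖y‖ := fun y => by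
    simp [indicator]
  have hradial : ∫ t in Ioi 0, t ^ (finrank ℝ E - 1) • (Iio R).indicator
      (fun t => t ^ (α - finrank ℝ E)) t = R ^ α / α := by
    calc _ = ∫ t in Ioi 0, (Iio R).indicator (fun t => t ^ (α - 1)) t := by
          refine setIntegral_congr_fun measurableSet_Ioi fun t (ht : 0 < t) => ?_
          by_cases htR : t < R
          · simp [htR, pow_sub_one_mul_rpow_sub finrank_pos α ht]
          · simp [htR]
      _ = ∫ t in (0)..R, t ^ (α - 1) := by
          rw [setIntegral_indicator measurableSet_Iio, Ioi_inter_Iio,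
            intervalIntegral.integral_of_le hR, integral_Ioc_eq_integral_Ioo]
      _ = R ^ α / α := by
          rw [integral_rpow (Or.inl (by linarith))]
          simp [Real.zero_rpow hα.ne']
  rw [← integral_indicator measurableSet_ball, funext hball, integral_fun_norm_addHaar, hradial]
  simp only [nsmul_eq_mul, smul_eq_mul]
  ring

theorem lintegral_ball_dist_rpow_sub_finrank {α : ℝ} (hα : 0 < α) (z : E) {R : ℝ}
    (hR : 0 ≤ R) :
    ∫⁻ y in ball z R, ENNReal.ofReal (dist y z ^ (α - finrank ℝ E)) ∂μ =
      ENNReal.ofReal (finrank ℝ E / α * R ^ α) * μ (ball 0 1) := by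
  have htranslate : ∀ y,
      (ball z R).indicator (fun y => ENNReal.ofReal (dist y z ^ (α - finrank ℝ E))) y =
        (ball 0 R).indicator (fun w => ENNReal.ofReal (‖w‖ ^ (α - finrank ℝ E))) (y - z) :=
    fun y => by simp [indicator, mem_ball, dist_eq_norm]
  rw [← lintegral_indicator measurableSet_ball, funext htranslate,
    lintegral_sub_right_eq_self (fun w => (ball (0 : E) R).indicator _ w),
    lintegral_indicator measurableSet_ball,
    ← ofReal_integral_eq_lintegral_ofReal (integrableOn_ball_norm_rpow_sub_finrank μ hα R)
      (ae_of_all _ fun y => by positivity),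
    integral_ball_norm_rpow_sub_finrank μ hα hR, ENNReal.ofReal_mul (by positivity),
    ofReal_measureReal measure_ball_lt_top.ne]

end Kernel

section Riesz

variable {n : ℕ}

/-- The Riesz potential without its normalising constant. -/
noncomputable def rieszPotential (α : ℝ) (g : EuclideanSpace ℝ (Fin n) → ℝ≥0∞)
    (y : EuclideanSpace ℝ (Fin n)) : ℝ≥0∞ :=
  ∫⁻ z, g z * ENNReal.ofReal (dist y z ^ (α - n))

lemma fracMax_le_rieszPotential (hn : 1 ≤ n) {α : ℝ} (hαn : α ≤ n)
    (g : EuclideanSpace ℝ (Fin n) → ℝ≥0∞) (y : EuclideanSpace ℝ (Fin n)) :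
    fracMax α g y ≤
      (volume (ball (0 : EuclideanSpace ℝ (Fin n)) 1))⁻¹ * rieszPotential α g y := by
  have : Nonempty (Fin n) := ⟨⟨0, hn⟩⟩
  set c := volume (ball (0 : EuclideanSpace ℝ (Fin n)) 1)
  refine iSup₂_le fun r hr => ?_
  have hscale :
      ENNReal.ofReal (r ^ α) / volume (ball y r) = c⁻¹ * ENNReal.ofReal (r ^ (α - n)) := by
    rw [Measure.addHaar_ball _ _ hr.le, finrank_euclideanSpace_fin, ENNReal.div_eq_inv_mul,
      ENNReal.mul_inv (Or.inl (by simp [hr])) (Or.inl ofReal_ne_top),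
      ← ENNReal.ofReal_inv_of_pos (by positivity), Real.rpow_sub hr, div_eq_mul_inv,
      ENNReal.ofReal_mul (by positivity), Real.rpow_natCast]
    ring
  have hpointwise : ∀ᵐ z ∂volume.restrict (ball y r),
      ENNReal.ofReal (r ^ (α - n)) * g z ≤ g z * ENNReal.ofReal (dist y z ^ (α - n)) := by
    filter_upwards [ae_restrict_mem measurableSet_ball, ae_restrict_of_ae (volume.ae_ne y)]
      with z hz hzy
    have hdist : 0 < dist y z := dist_pos.mpr (Ne.symm hzy)
    have hzr : dist y z ≤ r := by rw [dist_comm]; exact (mem_ball.mp hz).le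
    rw [mul_comm]
    exact mul_le_mul_right
      (ofReal_le_ofReal (Real.rpow_le_rpow_of_nonpos hdist hzr (sub_nonpos.mpr hαn))) _
  calc ENNReal.ofReal (r ^ α) * ⨍⁻ z in ball y r, g z ∂volume
      = c⁻¹ * ∫⁻ z in ball y r, ENNReal.ofReal (r ^ (α - n)) * g z := by
        rw [setLAverage_eq, ENNReal.div_eq_inv_mul, ← mul_assoc, ← div_eq_mul_inv, hscale,
          mul_assoc, lintegral_const_mul' _ _ ofReal_ne_top]
    _ ≤ c⁻¹ * ∫⁻ z in ball y r, g z * ENNReal.ofReal (dist y z ^ (α - n)) := by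
        gcongr 1
        exact lintegral_mono_ae hpointwise
    _ ≤ c⁻¹ * rieszPotential α g y := by
        gcongr
        exact setLIntegral_le_lintegral _ _

lemma setLIntegral_rieszPotential {α : ℝ} {g : EuclideanSpace ℝ (Fin n) → ℝ≥0∞}
    (hg : AEMeasurable g) (s : Set (EuclideanSpace ℝ (Fin n))) :
    ∫⁻ y in s, rieszPotential α g y =
      ∫⁻ z, g z * ∫⁻ y in s, ENNReal.ofReal (dist y z ^ (α - n)) := by
  have hkernel : Measurable fun p : EuclideanSpace ℝ (Fin n) × EuclideanSpace ℝ (Fin n) =>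
      ENNReal.ofReal (dist p.1 p.2 ^ (α - n)) :=
    (measurable_dist.pow_const _).ennreal_ofReal
  have hprod : AEMeasurable (fun p : EuclideanSpace ℝ (Fin n) × EuclideanSpace ℝ (Fin n) =>
      g p.2 * ENNReal.ofReal (dist p.1 p.2 ^ (α - n))) ((volume.restrict s).prod volume) :=
    hg.comp_snd.mul hkernel.aemeasurable
  unfold rieszPotential
  rw [lintegral_lintegral_swap hprod]
  refine lintegral_congr fun z => ?_
  have hz : Measurable fun y : EuclideanSpace ℝ (Fin n) => ENNReal.ofReal (dist y z ^ (α - n)) :=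
    ((measurable_id.dist measurable_const).pow_const _).ennreal_ofReal
  exact lintegral_const_mul _ hz

lemma setLIntegral_ball_rieszPotential_indicator_le (hn : 1 ≤ n) {α : ℝ} (hα : 0 < α)
    {g : EuclideanSpace ℝ (Fin n) → ℝ≥0∞} (hg : AEMeasurable g)
    (x : EuclideanSpace ℝ (Fin n)) {ρ : ℝ} (hρ : 0 ≤ ρ) :
    ∫⁻ y in ball x ρ, rieszPotential α ((ball x (2 * ρ)).indicator g) y ≤
      ENNReal.ofReal (n / α * (3 * ρ) ^ α) * volume (ball (0 : EuclideanSpace ℝ (Fin n)) 1) *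
        ∫⁻ z in ball x (2 * ρ), g z := by
  have : Nonempty (Fin n) := ⟨⟨0, hn⟩⟩
  set K :=
    ENNReal.ofReal (n / α * (3 * ρ) ^ α) * volume (ball (0 : EuclideanSpace ℝ (Fin n)) 1)
  have hkernel : ∀ z ∈ ball x (2 * ρ),
      ∫⁻ y in ball x ρ, ENNReal.ofReal (dist y z ^ (α - n)) ≤ K := fun z hz => by
    have hsub : ball x ρ ⊆ ball z (3 * ρ) :=
      ball_subset_ball' (by rw [dist_comm]; linarith [mem_ball.mp hz])
    calc _ ≤ ∫⁻ y in ball z (3 * ρ), ENNReal.ofReal (dist y z ^ (α - n)) :=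
          lintegral_mono_set hsub
      _ = K := by simpa using lintegral_ball_dist_rpow_sub_finrank volume hα z (by positivity)
  rw [setLIntegral_rieszPotential (hg.indicator measurableSet_ball), mul_comm K,
    ← lintegral_mul_const' _ _ (ENNReal.mul_ne_top ofReal_ne_top measure_ball_lt_top.ne),
    ← lintegral_indicator measurableSet_ball]
  refine lintegral_mono fun z => ?_
  by_cases hz : z ∈ ball x (2 * ρ)
  · simpa only [indicator_of_mem hz] using mul_le_mul_right (hkernel z hz) _
  · simp only [indicator_of_notMem hz, zero_mul, le_refl]

end Riesz

/-- there exists `C = C(n, α)` such that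
`∫_{B_ρ(x)} M_α(χ_{B_{2ρ}(x)} f) ≤ C ρ^α ∫_{B_{2ρ}(x)} |f|`. -/
theorem stmt8 (n : ℕ) (hn : 1 ≤ n) (α : ℝ) (hα0 : 0 < α) (hαn : α < n) :
    ∃ C : ℝ, 0 < C ∧
      ∀ (x : EuclideanSpace ℝ (Fin n)) (ρ : ℝ), 0 < ρ →
        ∀ f : EuclideanSpace ℝ (Fin n) → ℝ, LocallyIntegrable f volume →
          ∫⁻ y in ball x ρ,
              fracMax α ((ball x (2 * ρ)).indicator fun z => ENNReal.ofReal |f z|) y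
                ∂volume ≤
            ENNReal.ofReal (C * ρ ^ α) *
              ∫⁻ z in ball x (2 * ρ), ENNReal.ofReal |f z| ∂volume := by
  have : Nonempty (Fin n) := ⟨⟨0, hn⟩⟩
  set c := volume (ball (0 : EuclideanSpace ℝ (Fin n)) 1)
  have hc0 : c ≠ 0 := (measure_ball_pos volume _ one_pos).ne'
  have hctop : c ≠ ∞ := measure_ball_lt_top.ne
  refine ⟨n / α * 3 ^ α, by positivity, fun x ρ hρ f hf => ?_⟩
  set F := fun z => ENNReal.ofReal |f z|
  have hF : AEMeasurable F := hf.aestronglyMeasurable.aemeasurable.abs.ennreal_ofReal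
  calc ∫⁻ y in ball x ρ, fracMax α ((ball x (2 * ρ)).indicator F) y
      ≤ ∫⁻ y in ball x ρ, c⁻¹ * rieszPotential α ((ball x (2 * ρ)).indicator F) y :=
        lintegral_mono fun y => fracMax_le_rieszPotential hn hαn.le _ y
    _ = c⁻¹ * ∫⁻ y in ball x ρ, rieszPotential α ((ball x (2 * ρ)).indicator F) y :=
        lintegral_const_mul' _ _ (ENNReal.inv_ne_top.mpr hc0)
    _ ≤ c⁻¹ * (ENNReal.ofReal (n / α * (3 * ρ) ^ α) * c *
          ∫⁻ z in ball x (2 * ρ), F z) := by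
        gcongr
        exact setLIntegral_ball_rieszPotential_indicator_le hn hα0 hF x hρ.le
    _ = c⁻¹ * c * ENNReal.ofReal (n / α * (3 * ρ) ^ α) * ∫⁻ z in ball x (2 * ρ), F z :=
        by ring
    _ = ENNReal.ofReal (n / α * 3 ^ α * ρ ^ α) * ∫⁻ z in ball x (2 * ρ), F z := by
        rw [ENNReal.inv_mul_cancel hc0 hctop, one_mul, Real.mul_rpow (by norm_num) hρ.le,
          mul_assoc]
end

section
/- Let n ≥ 1, 0 < ε < 1, R ≥ R₁ > 0, x₀ ∈ ℝⁿ, and set Q = B_R(x₀). Let V ⊂ W ⊂ Q be Lebesgue measurable sets satisfying: (i) Lⁿ(V) < ε · Lⁿ(B_{R₁}(0)); and (ii) for all x ∈ Q and all r ∈ (0, R₁], if Lⁿ(V ∩ B_r(x)) ≥ ε · Lⁿ(B_r(x)) then B_r(x) ∩ Q ⊂ W. Then there exists a constant C depending only on n such that Lⁿ(V) ≤ C · ε · Lⁿ(W). -/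
/-!
By Lebesgue's density theorem almost every point of `V` sees density at least `ε` in some ball of
radius at most `R₁`. At such a point choose such a radius `ρ` with `4ρ` beyond every radius of
density at least `ε`: then the ball of radius `4ρ` has density at most `ε`, by the choice of `ρ`
if `4ρ ≤ R₁` and by the smallness of `Lⁿ(V)` otherwise. Vitali's lemma gives disjoint balls
`B_ρ(b)` whose fourfold enlargements cover these points. Each `B_ρ(b) ∩ Q` lies in `W` and contains
a ball of radius `ρ/2`, so `Lⁿ(V ∩ B_{4ρ}(b)) ≤ ε Lⁿ(B_{4ρ}(b)) ≤ 8ⁿ ε Lⁿ(B_ρ(b) ∩ Q)`, and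
summing over the disjoint balls bounds `Lⁿ(V)` by `8ⁿ ε Lⁿ(W)`.
-/

open MeasureTheory Metric ENNReal Module Set Filter Topology

theorem measure_biUnion_le_mul_of_pairwiseDisjoint {α ι : Type*} [MeasurableSpace α]
    (μ : Measure α) {u : Set ι} (hu : u.Countable) {A D : ι → Set α} {W : Set α} {K : ℝ≥0∞}
    (hD : u.PairwiseDisjoint D) (hDm : ∀ i ∈ u, MeasurableSet (D i)) (hDW : ∀ i ∈ u, D i ⊆ W)
    (hA : ∀ i ∈ u, μ (A i) ≤ K * μ (D i)) :
    μ (⋃ i ∈ u, A i) ≤ K * μ W :=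
  calc μ (⋃ i ∈ u, A i) ≤ ∑' i : u, μ (A i) := measure_biUnion_le μ hu A
    _ ≤ ∑' i : u, K * μ (D i) := ENNReal.tsum_le_tsum fun i => hA i i.2
    _ = K * μ (⋃ i ∈ u, D i) := by rw [ENNReal.tsum_mul_left, measure_biUnion hu hD hDm]
    _ ≤ K * μ W := by gcongr; exact iUnion₂_subset hDW

section Geometry

variable {E : Type*} [NormedAddCommGroup E] [NormedSpace ℝ E]

theorem exists_ball_subset_ball_inter_ball {x₀ x : E} {r R : ℝ} (hx : x ∈ ball x₀ R)
    (hr : 0 < r) (hrR : r ≤ R) : ∃ y, ball y (r / 2) ⊆ ball x r ∩ ball x₀ R := by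
  have hR : 0 < R := pos_of_mem_ball hx
  have hd : dist x x₀ < R := hx
  set t := r / (2 * R)
  have htR : t * R = r / 2 := by simp only [t]; field_simp
  have ht0 : 0 ≤ t := by positivity
  have ht1 : t ≤ 1 := by
    rw [div_le_one (by positivity)]
    linarith
  refine ⟨AffineMap.lineMap x x₀ t, fun z hz => ⟨?_, ?_⟩⟩
  · have hyx : dist (AffineMap.lineMap x x₀ t) x ≤ r / 2 := by
      rw [dist_lineMap_left, Real.norm_of_nonneg ht0, ← htR]
      exact mul_le_mul_of_nonneg_left hd.le ht0
    exact mem_ball.2 (by linarith [dist_triangle z (AffineMap.lineMap x x₀ t) x, mem_ball.1 hz])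
  · have hyx₀ : dist (AffineMap.lineMap x x₀ t) x₀ ≤ R - r / 2 := by
      rw [dist_lineMap_right, Real.norm_of_nonneg (by linarith), ← htR]
      nlinarith
    exact mem_ball.2 (by linarith [dist_triangle z (AffineMap.lineMap x x₀ t) x₀, mem_ball.1 hz])

end Geometry

section HaarMeasure

variable {E : Type*} [NormedAddCommGroup E] [MeasurableSpace E] [BorelSpace E]
  (μ : Measure E) [μ.IsAddHaarMeasure]

theorem exists_stopping_radius {c : ℝ≥0∞} {s : Set E} {R₁ : ℝ}
    (hs : μ s ≤ c * μ (ball 0 R₁)) {x : E}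
    (hx : ∃ r ∈ Ioc 0 R₁, c * μ (ball x r) ≤ μ (s ∩ ball x r)) {τ : ℝ} (hτ : 1 < τ) :
    ∃ ρ ∈ Ioc 0 R₁, c * μ (ball x ρ) ≤ μ (s ∩ ball x ρ) ∧
      μ (s ∩ ball x (τ * ρ)) ≤ c * μ (ball x (τ * ρ)) := by
  set S := {r ∈ Ioc 0 R₁ | c * μ (ball x r) ≤ μ (s ∩ ball x r)}
  have hbdd : BddAbove S := ⟨R₁, fun r hr => hr.1.2⟩
  obtain ⟨r₀, hr₀⟩ := hx
  have hsup : 0 < sSup S := hr₀.1.1.trans_le (le_csSup hbdd ⟨hr₀.1, hr₀.2⟩)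
  obtain ⟨ρ, ⟨hρ, hρdense⟩, hρsup⟩ :=
    exists_lt_of_lt_csSup ⟨r₀, hr₀⟩ (div_lt_self hsup hτ)
  have hτρ : sSup S < τ * ρ := by rwa [div_lt_iff₀' (by linarith)] at hρsup
  refine ⟨ρ, hρ, hρdense, ?_⟩
  rcases le_or_gt (τ * ρ) R₁ with hle | hgt
  · by_contra! hdense
    have hmem : τ * ρ ∈ S := ⟨⟨by nlinarith [hρ.1], hle⟩, hdense.le⟩
    exact (le_csSup hbdd hmem).not_gt hτρ
  · calc μ (s ∩ ball x (τ * ρ)) ≤ μ s := measure_mono inter_subset_left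
      _ ≤ c * μ (ball 0 R₁) := hs
      _ ≤ c * μ (ball x (τ * ρ)) := by
        rw [Measure.addHaar_ball_center μ x]
        gcongr

variable [NormedSpace ℝ E] [FiniteDimensional ℝ E]

theorem measure_ball_mul_le_measure_ball_inter_ball {x₀ x : E} {r R τ : ℝ}
    (hx : x ∈ ball x₀ R) (hr : 0 < r) (hrR : r ≤ R) (hτ : 0 < τ) :
    μ (ball x (τ * r)) ≤ ENNReal.ofReal ((2 * τ) ^ finrank ℝ E) * μ (ball x r ∩ ball x₀ R) := by
  obtain ⟨y, hy⟩ := exists_ball_subset_ball_inter_ball hx hr hrR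
  calc μ (ball x (τ * r)) = μ (ball x (2 * τ * (r / 2))) := by ring_nf
    _ = ENNReal.ofReal ((2 * τ) ^ finrank ℝ E) * μ (ball y (r / 2)) := by
      rw [Measure.addHaar_ball_mul_of_pos μ x (by positivity), Measure.addHaar_ball_center μ y]
    _ ≤ ENNReal.ofReal ((2 * τ) ^ finrank ℝ E) * μ (ball x r ∩ ball x₀ R) := by gcongr

theorem closedBall_ae_eq_ball (x : E) {r : ℝ} (hr : r ≠ 0) : closedBall x r =ᵐ[μ] ball x r := by
  have hsphere : sphere x r =ᵐ[μ] (∅ : Set E) :=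
    ae_eq_empty.2 (Measure.addHaar_sphere_of_ne_zero μ x hr)
  simpa [ball_union_sphere] using (ae_eq_refl (ball x r)).union hsphere

theorem measure_diff_setOf_exists_radius_le_measure_inter_ball {c : ℝ≥0∞} (hc : c < 1)
    (s : Set E) {R₁ : ℝ} (hR₁ : 0 < R₁) :
    μ (s \ {x | ∃ r ∈ Ioc 0 R₁, c * μ (ball x r) ≤ μ (s ∩ ball x r)}) = 0 := by
  set D := {x | ∃ r ∈ Ioc 0 R₁, c * μ (ball x r) ≤ μ (s ∩ ball x r)}
  suffices hD : ∀ᵐ x ∂μ.restrict s, x ∈ D by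
    rw [sdiff_eq, inter_comm]
    exact le_zero_iff.1 ((Measure.le_restrict_apply s Dᶜ).trans_eq (ae_iff.1 hD))
  filter_upwards [Besicovitch.ae_tendsto_measure_inter_div μ s] with x hx
  have hlarge : ∀ᶠ r in 𝓝[>] 0, c < μ (s ∩ closedBall x r) / μ (closedBall x r) :=
    hx.eventually (eventually_gt_nhds hc)
  obtain ⟨r, hcr, hr⟩ := (hlarge.and (Ioc_mem_nhdsGT hR₁)).exists
  refine ⟨r, hr, ?_⟩
  have hball := closedBall_ae_eq_ball μ x hr.1.ne'
  rw [← measure_congr hball, ← measure_congr ((ae_eq_refl s).inter hball)]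
  exact (ENNReal.mul_lt_of_lt_div hcr).le

theorem measure_le_mul_measure_of_density_ge_imp_subset {c : ℝ≥0∞} (hc : c < 1) {R R₁ : ℝ}
    (hR₁ : 0 < R₁) (hR₁R : R₁ ≤ R) {x₀ : E} {V W : Set E} (hVW : V ⊆ W) (hWQ : W ⊆ ball x₀ R)
    (hV : μ V ≤ c * μ (ball 0 R₁))
    (hW : ∀ x ∈ ball x₀ R, ∀ r ∈ Ioc 0 R₁,
      c * μ (ball x r) ≤ μ (V ∩ ball x r) → ball x r ∩ ball x₀ R ⊆ W) :
    μ V ≤ 8 ^ finrank ℝ E * c * μ W := by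
  set D := {x | ∃ r ∈ Ioc 0 R₁, c * μ (ball x r) ≤ μ (V ∩ ball x r)}
  set G := V ∩ D
  choose! ρ hρ hρdense hρsparse using fun x (hx : x ∈ G) =>
    exists_stopping_radius μ hV hx.2 (by norm_num : (1 : ℝ) < 4)
  obtain ⟨u, huG, hdisj, hcover⟩ := Vitali.exists_disjoint_subfamily_covering_enlargement_closedBall
    G id ρ R₁ (fun x hx => (hρ x hx).2) 4 (by norm_num)
  have hu : u.Countable := hdisj.countable_of_nonempty_interior fun b hb =>
    ⟨b, ball_subset_interior_closedBall (mem_ball_self (hρ b (huG hb)).1)⟩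
  have hGcover : G ⊆ ⋃ b ∈ u, V ∩ closedBall b (4 * ρ b) := fun x hx => by
    obtain ⟨b, hb, hsub⟩ := hcover x hx
    exact mem_biUnion hb ⟨hx.1, hsub (mem_closedBall_self (hρ x hx).1.le)⟩
  have hbQ : ∀ b ∈ u, b ∈ ball x₀ R := fun b hb => hWQ (hVW (huG hb).1)
  have hpiece : ∀ b ∈ u, μ (V ∩ closedBall b (4 * ρ b)) ≤
      8 ^ finrank ℝ E * c * μ (ball b (ρ b) ∩ ball x₀ R) := fun b hb => by
    obtain ⟨hρpos, hρR₁⟩ := hρ b (huG hb)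
    have henlarge := measure_ball_mul_le_measure_ball_inter_ball μ (hbQ b hb) hρpos
      (hρR₁.trans hR₁R) (by norm_num : (0 : ℝ) < 4)
    norm_num at henlarge
    calc μ (V ∩ closedBall b (4 * ρ b)) = μ (V ∩ ball b (4 * ρ b)) :=
          measure_congr ((ae_eq_refl V).inter (closedBall_ae_eq_ball μ b (by positivity)))
      _ ≤ c * μ (ball b (4 * ρ b)) := hρsparse b (huG hb)
      _ ≤ c * (8 ^ finrank ℝ E * μ (ball b (ρ b) ∩ ball x₀ R)) := by
        gcongr
      _ = 8 ^ finrank ℝ E * c * μ (ball b (ρ b) ∩ ball x₀ R) := by ring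
  calc μ V ≤ μ G + μ (V \ D) := measure_le_inter_add_sdiff μ V D
    _ = μ G := by rw [measure_diff_setOf_exists_radius_le_measure_inter_ball μ hc V hR₁, add_zero]
    _ ≤ μ (⋃ b ∈ u, V ∩ closedBall b (4 * ρ b)) := measure_mono hGcover
    _ ≤ 8 ^ finrank ℝ E * c * μ W :=
      measure_biUnion_le_mul_of_pairwiseDisjoint μ hu
        (hdisj.mono fun b => inter_subset_left.trans ball_subset_closedBall)
        (fun b _ => measurableSet_ball.inter measurableSet_ball)
        (fun b hb => hW b (hbQ b hb) (ρ b) (hρ b (huG hb)) (hρdense b (huG hb))) hpiece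

end HaarMeasure

theorem stmt12_general (n : ℕ) :
    ∃ C : ℝ, 0 < C ∧
      ∀ (ε R R₁ : ℝ) (x₀ : EuclideanSpace ℝ (Fin n))
        (V W : Set (EuclideanSpace ℝ (Fin n))),
        0 < ε → ε < 1 → 0 < R₁ → R₁ ≤ R →
        MeasurableSet V → MeasurableSet W →
        V ⊆ W → W ⊆ ball x₀ R →
        volume V < ENNReal.ofReal ε * volume (ball (0 : EuclideanSpace ℝ (Fin n)) R₁) →
        (∀ x ∈ ball x₀ R, ∀ r : ℝ, 0 < r → r ≤ R₁ →
          ENNReal.ofReal ε * volume (ball x r) ≤ volume (V ∩ ball x r) →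
          ball x r ∩ ball x₀ R ⊆ W) →
        volume V ≤ ENNReal.ofReal (C * ε) * volume W := by
  refine ⟨8 ^ n, by positivity, fun ε R R₁ x₀ V W _ hε hR₁ hR₁R _ _ hVW hWQ hV hW => ?_⟩
  have h := measure_le_mul_measure_of_density_ge_imp_subset volume (ofReal_lt_one.2 hε) hR₁
    hR₁R hVW hWQ hV.le fun x hx r hr => hW x hx r hr.1 hr.2
  rw [finrank_euclideanSpace_fin] at h
  rwa [ENNReal.ofReal_mul (by positivity), ENNReal.ofReal_pow (by norm_num), ENNReal.ofReal_ofNat]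

/-- the good-λ covering lemma. If `V ⊆ W ⊆ Q = B_R(x₀)` are measurable,
`Lⁿ(V) < ε Lⁿ(B_{R₁}(0))`, and for all `x ∈ Q`, `r ∈ (0, R₁]`, the density condition
`Lⁿ(V ∩ B_r(x)) ≥ ε Lⁿ(B_r(x))` implies `B_r(x) ∩ Q ⊆ W`, then
`Lⁿ(V) ≤ C ε Lⁿ(W)` with `C = C(n)`. -/
theorem stmt12 (n : ℕ) (hn : 1 ≤ n) :
    ∃ C : ℝ, 0 < C ∧
      ∀ (ε R R₁ : ℝ) (x₀ : EuclideanSpace ℝ (Fin n))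
        (V W : Set (EuclideanSpace ℝ (Fin n))),
        0 < ε → ε < 1 → 0 < R₁ → R₁ ≤ R →
        MeasurableSet V → MeasurableSet W →
        V ⊆ W → W ⊆ ball x₀ R →
        volume V < ENNReal.ofReal ε * volume (ball (0 : EuclideanSpace ℝ (Fin n)) R₁) →
        (∀ x ∈ ball x₀ R, ∀ r : ℝ, 0 < r → r ≤ R₁ →
          ENNReal.ofReal ε * volume (ball x r) ≤ volume (V ∩ ball x r) →
          ball x r ∩ ball x₀ R ⊆ W) →
        volume V ≤ ENNReal.ofReal (C * ε) * volume W :=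
  stmt12_general n
end
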